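/- Let n₀ ∈ ℕ and 0 < α < 1. For any finite sequence of measurable sets E₁, …, E_l ⊆ T² with |E_k| > 4π²α for each k, there exist natural numbers n₀ < n₁ < n₂ < ⋯ < n_l such that |⋃_{k=1}^l E_k(n_k)| > 4π²(1 − (1−α)^l). -/

import Mathlib

open MeasureTheory Real Filter

noncomputable section

instance : Fact (0 < 2 * π) := ⟨by positivity⟩

/-- The two-dimensional torus `(ℝ/2πℤ)²`. -/
abbrev T2 := AddCircle (2 * π) × AddCircle (2 * π)

/-- The dilation map `(x,y) ↦ (nx, ny)` on the torus. -/
def dil (n : ℕ) (p : T2) : T2 := (n • p.1, n • p.2)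

/-!
The dilations `x ↦ n • x` of a torus are mixing for Haar measure: under the dilation by `n` a
character `e_m` becomes `e_{n m}`, and for `m ≠ 0` these escape to infinity, so by Bessel's
inequality their inner products with any fixed `L²` function tend to `0`. As the dilations are
isometries of `L²` and the characters span a dense subspace, `⟪1_A, 1_B ∘ n⟫ → |A| |B|`.

The `n_k` are then chosen one at a time. If `S` is the complement of the union built so far,
`|S ∩ E(n)ᶜ| → |S| |Eᶜ|`, so for every large `n` adding `E(n)` multiplies the measure of the
complement by a factor close to `|Eᶜ| < 1 - α`.
-/

open Set Topology
open scoped ENNReal InnerProductSpace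

theorem Fin.strictMono_snoc {α : Type*} [Preorder α] {n : ℕ} {f : Fin n → α} (hf : StrictMono f)
    {x : α} (hx : ∀ i, f i < x) : StrictMono (Fin.snoc f x : Fin (n + 1) → α) := by
  intro i j hij
  induction j using Fin.lastCases with
  | last =>
    induction i using Fin.lastCases with
    | last => exact absurd hij (lt_irrefl _)
    | cast i => simpa using hx i
  | cast j =>
    induction i using Fin.lastCases with
    | last => exact absurd hij (Fin.le_last _).not_gt
    | cast i => simpa using hf (Fin.castSucc_lt_castSucc_iff.mp hij)

theorem ENNReal.prod_lt_pow_card {ι : Type*} [Fintype ι] [Nonempty ι] {f : ι → ℝ≥0∞}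
    {c : ℝ≥0∞} (h : ∀ i, f i < c) : ∏ i, f i < c ^ Fintype.card ι := by
  obtain ⟨i₀, hi₀⟩ := Finite.exists_max f
  calc ∏ i, f i ≤ f i₀ ^ Fintype.card ι := Finset.prod_le_pow_card _ _ _ fun i _ => hi₀ i
    _ < c ^ Fintype.card ι := ENNReal.pow_lt_pow_left Fintype.card_ne_zero (h i₀)

section Mixing

variable {X Y : Type*} [MeasurableSpace X] [MeasurableSpace Y]

def IsMixingSequence (μ : Measure X) (T : ℕ → X → X) : Prop :=
  ∀ ⦃A B : Set X⦄, MeasurableSet A → MeasurableSet B →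
    Tendsto (fun n => μ (A ∩ T n ⁻¹' B)) atTop (𝓝 (μ A * μ B))

theorem IsMixingSequence.of_measurableEquiv {μ : Measure X} {ν : Measure Y} {T : ℕ → X → X}
    {S : ℕ → Y → Y} (hS : IsMixingSequence ν S) (e : X ≃ᵐ Y) (he : MeasurePreserving e μ ν)
    (hTS : ∀ n x, e (T n x) = S n (e x)) : IsMixingSequence μ T := by
  intro A B hA hB
  have hpre : ∀ n, A ∩ T n ⁻¹' B = e ⁻¹' (e.symm ⁻¹' A ∩ S n ⁻¹' (e.symm ⁻¹' B)) := by
    intro n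
    ext x
    simp [← hTS]
  have hmeas : ∀ C, μ C = ν (e.symm ⁻¹' C) := fun C => by
    rw [← he.measure_preimage_equiv, ← preimage_comp, e.symm_comp_self, preimage_id]
  simp_rw [hpre, he.measure_preimage_equiv, hmeas A, hmeas B]
  exact hS (e.symm.measurable hA) (e.symm.measurable hB)

theorem IsMixingSequence.exists_strictMono_measure_iInter_preimage_lt {μ : Measure X}
    [IsProbabilityMeasure μ] {T : ℕ → X → X} (hmix : IsMixingSequence μ T)
    (hT : ∀ n, Measurable (T n)) (n₀ : ℕ) {l : ℕ} (F : Fin l → Set X)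
    (hF : ∀ k, MeasurableSet (F k)) {c : ℝ≥0∞} (hc : ∏ k, μ (F k) < c) :
    ∃ n : Fin l → ℕ, StrictMono n ∧ (∀ k, n₀ < n k) ∧ μ (⋂ k, T (n k) ⁻¹' F k) < c := by
  induction l generalizing c with
  | zero => exact ⟨Fin.elim0, fun a => a.elim0, fun k => k.elim0, by simpa using hc⟩
  | succ l ih =>
    rw [Fin.prod_univ_castSucc] at hc
    -- with the threshold `c / μ (F (last l))` for the first `l` sets, the mixing limit
    -- `μ S * μ (F (last l))` is below `c`
    obtain ⟨n, hn_mono, hn₀, hS⟩ := ih (fun k => F k.castSucc) (fun k => hF _)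
      (c := c / μ (F (Fin.last l))) <| (ENNReal.lt_div_iff_mul_lt
        (.inr (ENNReal.prod_ne_top fun _ _ => measure_ne_top _ _))
        (.inl (measure_ne_top _ _))).mpr hc
    set S := ⋂ k, T (n k) ⁻¹' F k.castSucc
    have hSmeas : MeasurableSet S := .iInter fun k => hT _ (hF _)
    obtain ⟨m, ⟨hm₀, hmn⟩, hm⟩ := (((eventually_gt_atTop n₀).and
      (eventually_all.2 fun k => eventually_gt_atTop (n k))).and
      ((hmix hSmeas (hF (Fin.last l))).eventually_lt_const (ENNReal.mul_lt_of_lt_div hS))).exists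
    refine ⟨Fin.snoc n m, Fin.strictMono_snoc hn_mono hmn, Fin.lastCases (by simpa) (by simpa), ?_⟩
    convert hm using 2
    ext x
    simp [Fin.forall_fin_succ', S]

theorem IsMixingSequence.exists_strictMono_measureReal_iUnion_preimage_gt {μ : Measure X}
    [IsProbabilityMeasure μ] {T : ℕ → X → X} (hmix : IsMixingSequence μ T)
    (hT : ∀ n, Measurable (T n)) (n₀ : ℕ) {α : ℝ} (hα : α < 1) {l : ℕ} (hl : l ≠ 0)
    (E : Fin l → Set X) (hE : ∀ k, MeasurableSet (E k)) (hαE : ∀ k, α < μ.real (E k)) :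
    ∃ n : Fin l → ℕ, StrictMono n ∧ (∀ k, n₀ < n k) ∧
      1 - (1 - α) ^ l < μ.real (⋃ k, T (n k) ⁻¹' E k) := by
  have : Nonempty (Fin l) := ⟨⟨0, Nat.pos_of_ne_zero hl⟩⟩
  have hcompl : ∀ k, μ (E k)ᶜ < ENNReal.ofReal (1 - α) := fun k => by
    rw [← ofReal_measureReal, ENNReal.ofReal_lt_ofReal_iff (by linarith),
      probReal_compl_eq_one_sub (hE k)]
    linarith [hαE k]
  have hprod := ENNReal.prod_lt_pow_card hcompl
  rw [Fintype.card_fin, ← ENNReal.ofReal_pow (by linarith)] at hprod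
  obtain ⟨n, hn_mono, hn₀, hlt⟩ := hmix.exists_strictMono_measure_iInter_preimage_lt hT n₀
    (fun k => (E k)ᶜ) (fun k => (hE k).compl) hprod
  refine ⟨n, hn_mono, hn₀, ?_⟩
  rw [← ofReal_measureReal, ENNReal.ofReal_lt_ofReal_iff (by positivity)] at hlt
  rw [← compl_compl (⋃ k, _), compl_iUnion,
    probReal_compl_eq_one_sub (.iInter fun k => (hT _ (hE k)).compl)]
  simpa only [preimage_compl, sub_lt_sub_iff_left] using hlt

end Mixing

section Hilbert

variable {ι 𝕜 E : Type*} [RCLike 𝕜] [NormedAddCommGroup E] [InnerProductSpace 𝕜 E]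

theorem HilbertBasis.tendsto_inner_cofinite (b : HilbertBasis ι 𝕜 E) (x : E) :
    Tendsto (fun i => ⟪x, b i⟫_𝕜) cofinite (𝓝 0) := by
  have h := (b.orthonormal.inner_products_summable x).tendsto_cofinite_zero
  rw [tendsto_zero_iff_norm_tendsto_zero]
  simpa [Function.comp_def, norm_inner_symm] using (continuous_sqrt.tendsto 0).comp h

theorem HilbertBasis.tendsto_inner_linearIsometry_apply {α : Type*} {l : Filter α}
    (b : HilbertBasis ι 𝕜 E) (K : α → E →ₗᵢ[𝕜] E) (σ : α → ι → ι)
    (hK : ∀ a i, K a (b i) = b (σ a i)) {i₀ : ι} (hσ₀ : ∀ a, σ a i₀ = i₀)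
    (hσ : ∀ i ≠ i₀, Tendsto (fun a => σ a i) l cofinite) (x y : E) :
    Tendsto (fun a => ⟪x, K a y⟫_𝕜) l (𝓝 (⟪x, b i₀⟫_𝕜 * ⟪b i₀, y⟫_𝕜)) := by
  have hequi : Equicontinuous fun a (y : E) => ⟪x, K a y⟫_𝕜 := by
    refine (LipschitzWith.uniformEquicontinuous _ ‖x‖₊ fun a => ?_).equicontinuous
    refine LipschitzWith.of_dist_le_mul fun y z => ?_
    rw [dist_eq_norm, dist_eq_norm, ← inner_sub_right, ← map_sub, ← (K a).norm_map (y - z)]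
    exact norm_inner_le_norm _ _
  have hclosed := hequi.isClosed_setOfPred_tendsto (l := l)
    (f := fun y => ⟪x, b i₀⟫_𝕜 * ⟪b i₀, y⟫_𝕜) (by fun_prop)
  have hspan : (Submodule.span 𝕜 (range b) : Set E) ⊆
      {y | Tendsto (fun a => ⟪x, K a y⟫_𝕜) l (𝓝 (⟪x, b i₀⟫_𝕜 * ⟪b i₀, y⟫_𝕜))} := by
    intro y hy
    induction hy using Submodule.span_induction with
    | mem y hy =>
      classical
      obtain ⟨i, rfl⟩ := hy
      simp only [mem_ofPred_eq, hK, orthonormal_iff_ite.mp b.orthonormal]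
      split_ifs with hi
      · subst hi
        simpa [hσ₀] using tendsto_const_nhds
      · simpa [Function.comp_def] using (b.tendsto_inner_cofinite x).comp (hσ i (Ne.symm hi))
    | zero => simpa using tendsto_const_nhds
    | add y z _ _ hy hz => simpa [inner_add_right, mul_add] using hy.add hz
    | smul c y _ hy =>
      simpa [inner_smul_right, mul_left_comm] using hy.const_mul c
  have hy : y ∈ closure (Submodule.span 𝕜 (range b) : Set E) := by
    rw [← Submodule.topologicalClosure_coe, b.dense_span]
    trivial
  exact closure_minimal hspan hclosed hy

end Hilbert

namespace UnitAddTorus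

open AddCircle

variable {d : Type*} [Fintype d]

-- `mFourierBasis` is a basis of `L²` for this measure, whereas the global `volume` on
-- `UnitAddCircle` is `ENNReal.ofReal 1 • haarAddCircle`.
local notation "μT" => Measure.pi fun _ : d => (haarAddCircle : Measure UnitAddCircle)

theorem measurePreserving_nsmul {n : ℕ} (hn : n ≠ 0) :
    MeasurePreserving (fun x : UnitAddTorus d => n • x) μT μT := by
  simpa only [natCast_zsmul] using
    Measure.measurePreserving_zsmul μT (n := n) (by exact_mod_cast hn)

theorem mFourier_nsmul (m : d → ℤ) (n : ℕ) (x : UnitAddTorus d) :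
    mFourier m (n • x) = mFourier (n • m) x := by
  simp only [mFourier, ContinuousMap.coe_mk, Pi.smul_apply, fourier_apply, ← natCast_zsmul,
    smul_smul, smul_eq_mul, mul_comm]

theorem compMeasurePreserving_mFourierLp {n : ℕ} (hn : n ≠ 0) (m : d → ℤ) :
    Lp.compMeasurePreserving _ (measurePreserving_nsmul hn) (mFourierLp 2 m) =
      mFourierLp 2 (n • m) := by
  refine Lp.ext ((Lp.coeFn_compMeasurePreserving _ _).trans ?_)
  refine ((measurePreserving_nsmul hn).quasiMeasurePreserving.ae_eq_comp
    (coeFn_mFourierLp 2 m)).trans ?_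
  refine .trans ?_ (coeFn_mFourierLp 2 (n • m)).symm
  exact .of_forall fun x => mFourier_nsmul m n x

theorem mFourierLp_zero_eq_indicatorConstLp :
    mFourierLp 2 (0 : d → ℤ) =
      indicatorConstLp 2 (μ := μT) MeasurableSet.univ (measure_ne_top _ _) 1 := by
  refine Lp.ext ((coeFn_mFourierLp 2 0).trans (indicatorConstLp_coeFn.trans ?_).symm)
  simp only [mFourier_zero, indicator_univ]
  rfl

theorem isMixingSequence_nsmul : IsMixingSequence μT (fun n (x : UnitAddTorus d) => n • x) := by
  intro A B hA hB
  -- the dilation by `0` is not measure preserving, so the Koopman operators are indexed by `n + 1`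
  suffices h : Tendsto (fun n => Measure.real μT (A ∩ (fun x => (n + 1) • x) ⁻¹' B)) atTop
      (𝓝 (Measure.real μT A * Measure.real μT B)) by
    rw [← tendsto_add_atTop_iff_nat 1]
    simp only [measureReal_def, ← ENNReal.toReal_mul] at h
    exact (ENNReal.tendsto_toReal_iff (fun _ => measure_ne_top _ _) (by finiteness)).mp h
  have hσ : ∀ m ≠ (0 : d → ℤ), Tendsto (fun n : ℕ => (n + 1) • m) atTop cofinite := by
    intro m hm
    have hinj : Function.Injective fun n : ℕ => n • m := by
      simpa only [Function.comp_def, natCast_zsmul] using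
        (smul_left_injective ℤ hm).comp Nat.cast_injective
    rw [← Nat.cofinite_eq_atTop]
    exact (hinj.comp (add_left_injective 1)).tendsto_cofinite
  have h := mFourierBasis.tendsto_inner_linearIsometry_apply
    (fun n => Lp.compMeasurePreservingₗᵢ ℂ _ (measurePreserving_nsmul n.succ_ne_zero))
    (fun n m => (n + 1) • m)
    (fun n m => by rw [coe_mFourierBasis]; exact compMeasurePreserving_mFourierLp n.succ_ne_zero m)
    (fun n => smul_zero _) hσ (indicatorConstLp 2 (μ := μT) hA (measure_ne_top _ _) 1)
    (indicatorConstLp 2 (μ := μT) hB (measure_ne_top _ _) 1)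
  refine tendsto_ofReal_iff.mp ?_
  convert h using 2 with n
  · exact (L2.inner_indicatorConstLp_one_indicatorConstLp_one hA
      (hB.preimage (measurePreserving_nsmul n.succ_ne_zero).measurable)).symm
  · rw [coe_mFourierBasis, mFourierLp_zero_eq_indicatorConstLp,
      L2.inner_indicatorConstLp_one_indicatorConstLp_one,
      L2.inner_indicatorConstLp_one_indicatorConstLp_one, inter_univ, univ_inter,
      Complex.ofReal_mul]
    rfl

end UnitAddTorus

namespace AddCircle

variable {p q : ℝ} [Fact (0 < p)] [Fact (0 < q)]

theorem measurePreserving_homeomorphAddCircle (hp : p ≠ 0) (hq : q ≠ 0) :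
    MeasurePreserving (homeomorphAddCircle p q hp hq) haarAddCircle haarAddCircle :=
  AddMonoidHom.measurePreserving (f := (equivAddCircle p q hp hq).toAddMonoidHom)
    (homeomorphAddCircle p q hp hq).continuous (equivAddCircle p q hp hq).surjective (by simp)

theorem volume_prod_eq_smul_haarAddCircle :
    (volume : Measure (AddCircle p × AddCircle q)) =
      ENNReal.ofReal (p * q) • (haarAddCircle : Measure (AddCircle p)).prod haarAddCircle := by
  rw [Measure.volume_eq_prod, volume_eq_smul_haarAddCircle, volume_eq_smul_haarAddCircle,
    Measure.prod_smul_left, Measure.prod_smul_right, smul_smul,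
    ENNReal.ofReal_mul (Fact.out : 0 < p).le]

theorem isMixingSequence_nsmul_prod :
    IsMixingSequence ((haarAddCircle : Measure (AddCircle p)).prod haarAddCircle)
      (fun n (x : AddCircle p × AddCircle q) => n • x) := by
  have hp : p ≠ 0 := (Fact.out : 0 < p).ne'
  have hq : q ≠ 0 := (Fact.out : 0 < q).ne'
  let e : AddCircle p × AddCircle q ≃ᵐ UnitAddTorus (Fin 2) :=
    ((homeomorphAddCircle p 1 hp one_ne_zero).toMeasurableEquiv.prodCongr
      (homeomorphAddCircle q 1 hq one_ne_zero).toMeasurableEquiv).trans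
      MeasurableEquiv.finTwoArrow.symm
  refine UnitAddTorus.isMixingSequence_nsmul.of_measurableEquiv e ?_ fun n x => ?_
  · exact (measurePreserving_finTwoArrow haarAddCircle).symm.comp
      ((measurePreserving_homeomorphAddCircle hp one_ne_zero).prod
        (measurePreserving_homeomorphAddCircle hq one_ne_zero))
  · ext i
    fin_cases i
    · exact map_nsmul (equivAddCircle p 1 hp one_ne_zero) n x.1
    · exact map_nsmul (equivAddCircle q 1 hq one_ne_zero) n x.2

end AddCircle

theorem stmt3_general (n₀ : ℕ) (α : ℝ) (hα1 : α < 1) (l : ℕ) (hl : 0 < l)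
    (E : Fin l → Set T2) (hE : ∀ k, MeasurableSet (E k))
    (hmeas : ∀ k, (volume (E k)).toReal > 4 * π ^ 2 * α) :
    ∃ n : Fin l → ℕ, StrictMono n ∧ (∀ k, n₀ < n k) ∧
      (volume (⋃ k, dil (n k) ⁻¹' E k)).toReal > 4 * π ^ 2 * (1 - (1 - α) ^ l) := by
  set μ := (AddCircle.haarAddCircle : Measure (AddCircle (2 * π))).prod
    (AddCircle.haarAddCircle : Measure (AddCircle (2 * π)))
  have hπ : 0 < 4 * π ^ 2 := by positivity
  have hvol : ∀ S, (volume S).toReal = 4 * π ^ 2 * μ.real S := fun S => by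
    rw [AddCircle.volume_prod_eq_smul_haarAddCircle, Measure.smul_apply, smul_eq_mul,
      ENNReal.toReal_mul, ENNReal.toReal_ofReal (by positivity), measureReal_def]
    ring
  obtain ⟨n, hn_mono, hn₀, hn⟩ :=
    AddCircle.isMixingSequence_nsmul_prod.exists_strictMono_measureReal_iUnion_preimage_gt
      (fun n => (continuous_const_smul n).measurable) n₀ hα1 hl.ne' E hE
      fun k => lt_of_mul_lt_mul_left (hvol (E k) ▸ hmeas k) hπ.le
  exact ⟨n, hn_mono, hn₀, hvol _ ▸ mul_lt_mul_of_pos_left hn hπ⟩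

/-- Given sets `E₁,…,E_l ⊆ T²` with `|E_k| > 4π²α`, there exist
`n₀ < n₁ < ⋯ < n_l` with `|⋃ E_k(n_k)| > 4π²(1-(1-α)^l)`. -/
theorem stmt3 (n₀ : ℕ) (α : ℝ) (hα0 : 0 < α) (hα1 : α < 1) (l : ℕ) (hl : 0 < l)
    (E : Fin l → Set T2) (hE : ∀ k, MeasurableSet (E k))
    (hmeas : ∀ k, (volume (E k)).toReal > 4 * π ^ 2 * α) :
    ∃ n : Fin l → ℕ, StrictMono n ∧ (∀ k, n₀ < n k) ∧
      (volume (⋃ k, dil (n k) ⁻¹' E k)).toReal > 4 * π ^ 2 * (1 - (1 - α) ^ l) :=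
  stmt3_general n₀ α hα1 l hl E hE hmeas
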